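/- In the robust phase estimation recursion: suppose angles φ_0,…,φ_m and a target E ∈ ℝ satisfy d(φ_j, 2^j E) < π/3 for all j = 0,…,m, where d is the circle distance mod 2π. Define θ_{-1} = 0 and θ_j = argmin over the set S_j = {2^{-j}(2πk + φ_j) : k = 0,…,2^j - 1} of the distance to θ_{j-1}. Then d(θ_m, E) ≤ 2^{-m}·π/3. -/
import Mathlib


/-- Distance between two angles on the circle `ℝ / 2πℤ`. -/
noncomputable def circleDist (θ φ : ℝ) : ℝ := ⨅ k : ℤ, |θ - φ + 2 * (k : ℝ) * Real.pi|

lemma circleDist_bdd (θ φ : ℝ) :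
    BddBelow (Set.range fun k : ℤ => |θ - φ + 2 * (k : ℝ) * Real.pi|) :=
  ⟨0, by rintro x ⟨k, rfl⟩; positivity⟩

lemma circleDist_le (θ φ : ℝ) (k : ℤ) :
    circleDist θ φ ≤ |θ - φ + 2 * (k : ℝ) * Real.pi| :=
  ciInf_le (circleDist_bdd θ φ) k

lemma le_circleDist {c : ℝ} {θ φ : ℝ}
    (h : ∀ k : ℤ, c ≤ |θ - φ + 2 * (k : ℝ) * Real.pi|) : c ≤ circleDist θ φ :=
  le_ciInf h

lemma circleDist_comm (θ φ : ℝ) : circleDist θ φ = circleDist φ θ := by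
  have key : ∀ a b : ℝ, circleDist a b ≤ circleDist b a := by
    intro a b
    refine le_ciInf fun k => ?_
    have := circleDist_le a b (-k)
    calc circleDist a b ≤ |a - b + 2 * ((-k : ℤ) : ℝ) * Real.pi| := this
      _ = |b - a + 2 * (k : ℝ) * Real.pi| := by
          push_cast
          rw [show a - b + 2 * -(k : ℝ) * Real.pi = -(b - a + 2 * (k : ℝ) * Real.pi) by ring,
            abs_neg]
  exact le_antisymm (key θ φ) (key φ θ)

lemma circleDist_triangle (a b c : ℝ) :
    circleDist a c ≤ circleDist a b + circleDist b c := by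
  have h : ∀ k l : ℤ, circleDist a c ≤
      |a - b + 2 * (k : ℝ) * Real.pi| + |b - c + 2 * (l : ℝ) * Real.pi| := by
    intro k l
    calc circleDist a c ≤ |a - c + 2 * ((k + l : ℤ) : ℝ) * Real.pi| := circleDist_le a c (k + l)
      _ ≤ |a - b + 2 * (k : ℝ) * Real.pi| + |b - c + 2 * (l : ℝ) * Real.pi| := by
          push_cast
          have : a - c + 2 * ((k : ℝ) + l) * Real.pi =
              (a - b + 2 * (k : ℝ) * Real.pi) + (b - c + 2 * (l : ℝ) * Real.pi) := by ring
          rw [this]; exact abs_add_le _ _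
  have h2 : ∀ k : ℤ, circleDist a c - |a - b + 2 * (k : ℝ) * Real.pi| ≤ circleDist b c :=
    fun k => le_ciInf fun l => by linarith [h k l]
  have h3 : circleDist a c - circleDist b c ≤ circleDist a b :=
    le_ciInf fun k => by linarith [h2 k]
  linarith

/-- Robust phase estimation recursion: if `d(φ j, 2^j E) < π/3` for all `j ≤ m`, and the
estimates `θ` follow the recursion (`θ 0 = 0` corresponds to `θ_{-1}`, and `θ (j+1)` is a
closest element of `S j = {2^{-j}(2πk + φ j) : k < 2^j}` to `θ j`), then
`d(θ_m, E) ≤ 2^{-m} π/3`. -/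
theorem robust_phase_estimation_accuracy (E : ℝ) (m : ℕ) (φ θ : ℕ → ℝ)
    (hφ : ∀ j ≤ m, circleDist (φ j) (2 ^ j * E) < Real.pi / 3)
    (hθ0 : θ 0 = 0)
    (hmem : ∀ j ≤ m, ∃ k : Fin (2 ^ j),
      θ (j + 1) = (2 : ℝ)⁻¹ ^ j * (2 * Real.pi * (k : ℝ) + φ j))
    (hmin : ∀ j ≤ m, ∀ k : Fin (2 ^ j),
      circleDist (θ (j + 1)) (θ j) ≤
        circleDist ((2 : ℝ)⁻¹ ^ j * (2 * Real.pi * (k : ℝ) + φ j)) (θ j)) :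
    circleDist (θ (m + 1)) E ≤ (2 : ℝ)⁻¹ ^ m * (Real.pi / 3) := by
  have pipos := Real.pi_pos
  suffices H : ∀ j, j ≤ m → circleDist (θ (j + 1)) E ≤ (2 : ℝ)⁻¹ ^ j * (Real.pi / 3) from
    H m le_rfl
  intro j
  induction j with
  | zero =>
    intro h0
    obtain ⟨k, hk⟩ := hmem 0 h0
    have hk0 : ((k : ℕ) : ℝ) = 0 := by
      have : (k : ℕ) = 0 := by omega
      simp [this]
    have hθ1 : θ 1 = φ 0 := by rw [hk, hk0]; ring
    have h := hφ 0 h0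
    rw [pow_zero, one_mul] at h ⊢
    rw [hθ1]
    linarith
  | succ j IH =>
    intro hj1
    have IH' := IH (Nat.le_of_succ_le hj1)
    set n := j + 1 with hn
    -- extract a good representative from hφ n
    have hφn : ⨅ k : ℤ, |φ n - 2 ^ n * E + 2 * (k : ℝ) * Real.pi| < Real.pi / 3 := hφ n hj1
    obtain ⟨K, hK⟩ := exists_lt_of_ciInf_lt hφn
    set p : ℝ := (2 : ℝ)⁻¹ ^ n with hpdef
    have hp2 : p * 2 ^ n = 1 := by
      rw [hpdef, ← mul_pow]; norm_num
    have hppos : 0 < p := by positivity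
    set δ : ℝ := 2 ^ n * E - φ n - 2 * (K : ℝ) * Real.pi with hδdef
    have hδ : |δ| < Real.pi / 3 := by
      rw [show δ = -(φ n - 2 ^ n * E + 2 * (K : ℝ) * Real.pi) by rw [hδdef]; ring, abs_neg]
      exact hK
    have hE : E = p * (φ n + δ + 2 * (K : ℝ) * Real.pi) := by
      have h1 : φ n + δ + 2 * (K : ℝ) * Real.pi = 2 ^ n * E := by rw [hδdef]; ring
      linear_combination (-p) * h1 + (-E) * hp2
    -- the good candidate index
    have hNpos : (0 : ℤ) < 2 ^ n := by positivity
    set k0 : ℕ := (K % (2 ^ n : ℤ)).toNat with hk0def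
    have hk0cast : (k0 : ℤ) = K % (2 ^ n : ℤ) :=
      Int.toNat_of_nonneg (Int.emod_nonneg _ (ne_of_gt hNpos))
    have hk0lt : k0 < 2 ^ n := by
      have h1 := Int.emod_lt_of_pos K hNpos
      have h2 := Int.emod_nonneg K (ne_of_gt hNpos)
      have hcast : ((2 ^ n : ℕ) : ℤ) = (2 : ℤ) ^ n := by push_cast; ring
      omega
    set t : ℤ := -(K / (2 ^ n : ℤ)) with htdef
    have hk0K : (k0 : ℤ) = K + 2 ^ n * t := by
      rw [hk0cast, htdef, Int.emod_def]; ring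
    have hk0R : (k0 : ℝ) = (K : ℝ) + 2 ^ n * (t : ℝ) := by
      exact_mod_cast congrArg (Int.cast : ℤ → ℝ) hk0K
    set s : ℝ := (2 : ℝ)⁻¹ ^ n * (2 * Real.pi * ((⟨k0, hk0lt⟩ : Fin (2 ^ n)) : ℝ) + φ n)
      with hsdef
    have hsval : s = p * (2 * Real.pi * (k0 : ℝ) + φ n) := by rw [hsdef, hpdef]
    -- Claim A: circleDist s E < p * (π/3)
    have hsE : circleDist s E < p * (Real.pi / 3) := by
      have h1 : s - E + 2 * ((-t : ℤ) : ℝ) * Real.pi = -(p * δ) := by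
        push_cast
        rw [hsval, hE]
        linear_combination (2 * Real.pi * p) * hk0R + (2 * Real.pi * (t : ℝ)) * hp2
      calc circleDist s E ≤ |s - E + 2 * ((-t : ℤ) : ℝ) * Real.pi| := circleDist_le s E (-t)
        _ = p * |δ| := by rw [h1, abs_neg, abs_mul, abs_of_pos hppos]
        _ < p * (Real.pi / 3) := by exact mul_lt_mul_of_pos_left hδ hppos
    -- Claim B: previous estimate
    have hprev : circleDist (θ n) E ≤ 2 * (p * (Real.pi / 3)) := by
      have h2 : (2 : ℝ)⁻¹ ^ j = 2 * p := by
        rw [hpdef, hn, pow_succ]; norm_num; ring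
      rw [hn]
      calc circleDist (θ (j + 1)) E ≤ (2 : ℝ)⁻¹ ^ j * (Real.pi / 3) := IH'
        _ = 2 * (p * (Real.pi / 3)) := by rw [h2]; ring
    -- Claim C
    have hsθn : circleDist s (θ n) < p * Real.pi := by
      calc circleDist s (θ n) ≤ circleDist s E + circleDist E (θ n) := circleDist_triangle _ _ _
        _ = circleDist s E + circleDist (θ n) E := by rw [circleDist_comm E]
        _ < p * (Real.pi / 3) + 2 * (p * (Real.pi / 3)) := by linarith
        _ = p * Real.pi := by ring
    have hstep : circleDist (θ (n + 1)) (θ n) ≤ circleDist s (θ n) := hmin n hj1 ⟨k0, hk0lt⟩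
    -- identify θ (n+1) with s
    obtain ⟨k', hk'⟩ := hmem n hj1
    have hks : (k' : ℕ) = k0 := by
      by_contra hne
      -- distance between distinct candidates is at least 2πp
      have hsep : 2 * Real.pi * p ≤ circleDist (θ (n + 1)) s := by
        refine le_circleDist fun K' => ?_
        have hint : ((k' : ℕ) : ℤ) - (k0 : ℤ) + 2 ^ n * K' ≠ 0 := by
          intro h0
          have b1 : ((k' : ℕ) : ℤ) < 2 ^ n := by exact_mod_cast k'.isLt
          have b2 : ((k0 : ℕ) : ℤ) < 2 ^ n := by exact_mod_cast hk0lt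
          have b3 : (0 : ℤ) ≤ ((k' : ℕ) : ℤ) := Int.natCast_nonneg _
          have b4 : (0 : ℤ) ≤ ((k0 : ℕ) : ℤ) := Int.natCast_nonneg _
          have hK' : K' ≠ 0 := by
            rintro rfl
            simp only [mul_zero, add_zero, sub_eq_zero] at h0
            exact hne (by exact_mod_cast h0)
          have h1 : (1 : ℤ) ≤ |K'| := Int.one_le_abs hK'
          have h3 : |(k0 : ℤ) - ((k' : ℕ) : ℤ)| < 2 ^ n :=
            abs_lt.mpr ⟨by linarith, by linarith⟩
          have h4 : (2 ^ n : ℤ) ≤ |2 ^ n * K'| := by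
            rw [abs_mul, abs_of_pos hNpos]; nlinarith
          have h5 : (2 ^ n : ℤ) * K' = (k0 : ℤ) - ((k' : ℕ) : ℤ) := by linarith
          rw [h5] at h4
          linarith
        have habs : (1 : ℤ) ≤ |((k' : ℕ) : ℤ) - (k0 : ℤ) + 2 ^ n * K'| := Int.one_le_abs hint
        have hexpr : θ (n + 1) - s + 2 * (K' : ℝ) * Real.pi =
            2 * Real.pi * p * ((((k' : ℕ) : ℤ) - (k0 : ℤ) + 2 ^ n * K' : ℤ) : ℝ) := by
          rw [hk', hsval]
          push_cast
          linear_combination (-2 * Real.pi * (K' : ℝ)) * hp2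
        rw [hexpr, abs_mul, abs_of_pos (by positivity : (0:ℝ) < 2 * Real.pi * p)]
        have h6 : (1 : ℝ) ≤ |((((k' : ℕ) : ℤ) - (k0 : ℤ) + 2 ^ n * K' : ℤ) : ℝ)| := by
          rw [← Int.cast_abs]
          exact_mod_cast habs
        have h7 := mul_le_mul_of_nonneg_left h6
          (by positivity : (0 : ℝ) ≤ 2 * Real.pi * p)
        linarith
      have htri : circleDist (θ (n + 1)) s ≤
          circleDist (θ (n + 1)) (θ n) + circleDist (θ n) s := circleDist_triangle _ _ _
      rw [circleDist_comm (θ n) s] at htri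
      linarith
    have hcast' : ((k' : ℕ) : ℝ) = ((k0 : ℕ) : ℝ) := by exact_mod_cast hks
    have hθs : θ (n + 1) = s := by rw [hk', ← hpdef, hcast', hsval]
    rw [hθs]
    exact le_of_lt hsE
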